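/- Let n ≥ 1, let P be a partition of {1,…,n}, let t assign to each block of P a type in {A, D, B, C, BC} such that every block of type D has at least two elements, and let Φ = ⋃_{B∈P} Φ_{t(B)}(B). Then Ker(Φ) := {v ∈ ℝ^n : ⟨α,v⟩ = 0 for all α ∈ Φ} equals the linear span of the vectors e_B := Σ_{i∈B} e_i, where B ranges over the blocks of P of type A (including singleton blocks). -/
import Mathlib


open Finset

noncomputable section

/-- Standard basis vector `e i` of `ℝ^n`. -/
def E {n : ℕ} (i : Fin n) : Fin n → ℝ := Pi.single i 1

/-- Standard inner product on `ℝ^n`. -/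
def dot {n : ℕ} (v w : Fin n → ℝ) : ℝ := ∑ i, v i * w i

/-- Reflection across the hyperplane orthogonal to `α`. -/
def reflRoot {n : ℕ} (α v : Fin n → ℝ) : Fin n → ℝ := v - (2 * dot v α / dot α α) • α

/-- The root system `A_{n-1}`. -/
def Aset (n : ℕ) : Set (Fin n → ℝ) := {α | ∃ i j : Fin n, i ≠ j ∧ α = E i - E j}

/-- The root system `D_n`. -/
def Dset (n : ℕ) : Set (Fin n → ℝ) :=
  {α | ∃ i j : Fin n, i ≠ j ∧ (α = E i - E j ∨ α = E i + E j ∨ α = -(E i + E j))}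

/-- The root system `B_n`. -/
def Bset (n : ℕ) : Set (Fin n → ℝ) := Dset n ∪ {α | ∃ i : Fin n, α = E i ∨ α = -E i}

/-- The root system `C_n`. -/
def Cset (n : ℕ) : Set (Fin n → ℝ) :=
  Dset n ∪ {α | ∃ i : Fin n, α = (2:ℝ) • E i ∨ α = -((2:ℝ) • E i)}

/-- The nonreduced root system `BC_n`. -/
def BCset (n : ℕ) : Set (Fin n → ℝ) := Bset n ∪ Cset n

/-- Types of classical irreducible root (sub)systems. -/
inductive RType | A | D | B | C | BC
deriving DecidableEq

/-- Type-`A` system on a block `B`. -/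
def PhiA {n : ℕ} (B : Finset (Fin n)) : Set (Fin n → ℝ) :=
  {α | ∃ i ∈ B, ∃ j ∈ B, i ≠ j ∧ α = E i - E j}

/-- Type-`D` system on a block `B`. -/
def PhiD {n : ℕ} (B : Finset (Fin n)) : Set (Fin n → ℝ) :=
  {α | ∃ i ∈ B, ∃ j ∈ B, i ≠ j ∧ (α = E i - E j ∨ α = E i + E j ∨ α = -(E i + E j))}

/-- Type-`B` system on a block `B`. -/
def PhiB {n : ℕ} (B : Finset (Fin n)) : Set (Fin n → ℝ) :=
  PhiD B ∪ {α | ∃ i ∈ B, α = E i ∨ α = -E i}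

/-- Type-`C` system on a block `B`. -/
def PhiC {n : ℕ} (B : Finset (Fin n)) : Set (Fin n → ℝ) :=
  PhiD B ∪ {α | ∃ i ∈ B, α = (2:ℝ) • E i ∨ α = -((2:ℝ) • E i)}

/-- Type-`BC` system on a block `B`. -/
def PhiBC {n : ℕ} (B : Finset (Fin n)) : Set (Fin n → ℝ) := PhiB B ∪ PhiC B

/-- The classical system of the given type on a block. -/
def PhiOf {n : ℕ} : RType → Finset (Fin n) → Set (Fin n → ℝ)
  | RType.A => PhiA
  | RType.D => PhiD
  | RType.B => PhiB
  | RType.C => PhiC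
  | RType.BC => PhiBC

variable {n : ℕ}

lemma E_apply (a k : Fin n) : E a k = if k = a then 1 else 0 := by
  simp [E, Pi.single_apply]

lemma sumE (B : Finset (Fin n)) (a : Fin n) : (∑ j ∈ B, E j) a = if a ∈ B then 1 else 0 := by
  rw [Finset.sum_apply]
  simp only [E_apply]
  rw [Finset.sum_ite_eq]

lemma sumE' (B : Finset (Fin n)) (a : Fin n) : ∑ k ∈ B, E a k = if a ∈ B then 1 else 0 := by
  simp only [E_apply]
  rw [Finset.sum_ite_eq']

lemma dot_sumE (α : Fin n → ℝ) (B : Finset (Fin n)) :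
    dot α (∑ j ∈ B, E j) = ∑ k ∈ B, α k := by
  unfold dot
  simp only [sumE, mul_ite, mul_one, mul_zero]
  rw [Finset.sum_ite_mem, Finset.univ_inter]

lemma dot_E (a : Fin n) (v : Fin n → ℝ) : dot (E a) v = v a := by
  simp [dot, E_apply, ite_mul, one_mul, zero_mul, Finset.sum_ite_eq']

lemma dot_sub (α β v : Fin n → ℝ) : dot (α - β) v = dot α v - dot β v := by
  simp [dot, sub_mul, Finset.sum_sub_distrib]

lemma dot_add (α β v : Fin n → ℝ) : dot (α + β) v = dot α v + dot β v := by
  simp [dot, add_mul, Finset.sum_add_distrib]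

lemma dot_neg (α v : Fin n → ℝ) : dot (-α) v = -dot α v := by
  simp [dot]

lemma dot_smul (c : ℝ) (α v : Fin n → ℝ) : dot (c • α) v = c * dot α v := by
  simp [dot, Finset.mul_sum, mul_assoc]

lemma dot_add_right (α v w : Fin n → ℝ) : dot α (v + w) = dot α v + dot α w := by
  simp [dot, mul_add, Finset.sum_add_distrib]

lemma dot_smul_right (c : ℝ) (α v : Fin n → ℝ) : dot α (c • v) = c * dot α v := by
  simp [dot, Finset.mul_sum]; congr 1; ext i; ring


/-- The kernel of a root subsystem in standard form is spanned by the sums `e_B`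
over the blocks `B` of type `A` (including singletons). -/
theorem stmt4 (n : ℕ) (hn : 1 ≤ n)
    (blk : Fin n → Finset (Fin n)) (hblk1 : ∀ i, i ∈ blk i)
    (hblk2 : ∀ i j, j ∈ blk i → blk j = blk i)
    (t : Finset (Fin n) → RType)
    (hD : ∀ i, t (blk i) = RType.D → 2 ≤ (blk i).card) :
    {v : Fin n → ℝ | ∀ α ∈ ⋃ i, PhiOf (t (blk i)) (blk i), dot α v = 0} =
      (Submodule.span ℝ
        {v : Fin n → ℝ | ∃ i, t (blk i) = RType.A ∧ v = ∑ j ∈ blk i, E j} :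
        Set (Fin n → ℝ)) := by
  set S : Set (Fin n → ℝ) :=
    {v : Fin n → ℝ | ∃ i, t (blk i) = RType.A ∧ v = ∑ j ∈ blk i, E j} with hS
  have hmem : ∀ i j : Fin n, j ∈ blk i ↔ i ∈ blk j := by
    intro i j
    constructor
    · intro h; rw [hblk2 i j h]; exact hblk1 i
    · intro h; rw [hblk2 j i h]; exact hblk1 j
  ext v
  simp only [Set.mem_setOf_eq, SetLike.mem_coe]
  constructor
  · intro hv
    have hroot : ∀ (i : Fin n) (α : Fin n → ℝ),
        α ∈ PhiOf (t (blk i)) (blk i) → dot α v = 0 := by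
      intro i α h
      exact hv α (Set.mem_iUnion.2 ⟨i, h⟩)
    have K1 : ∀ i : Fin n, t (blk i) ≠ RType.A → v i = 0 := by
      intro i hA
      rcases h : t (blk i) with _ | _ | _ | _ | _
      · exact absurd h hA
      · -- D
        obtain ⟨k, hk, hki⟩ := Finset.exists_mem_ne (hD i h) i
        have h1 : dot (E i - E k) v = 0 := by
          refine hroot i _ ?_
          rw [h]
          exact ⟨i, hblk1 i, k, hk, (Ne.symm hki), Or.inl rfl⟩
        have h2 : dot (E i + E k) v = 0 := by
          refine hroot i _ ?_
          rw [h]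
          exact ⟨i, hblk1 i, k, hk, (Ne.symm hki), Or.inr (Or.inl rfl)⟩
        rw [dot_sub, dot_E, dot_E] at h1
        rw [dot_add, dot_E, dot_E] at h2
        linarith
      · -- B
        have h1 : dot (E i) v = 0 := by
          refine hroot i _ ?_
          rw [h]
          exact Or.inr ⟨i, hblk1 i, Or.inl rfl⟩
        rwa [dot_E] at h1
      · -- C
        have h1 : dot ((2:ℝ) • E i) v = 0 := by
          refine hroot i _ ?_
          rw [h]
          exact Or.inr ⟨i, hblk1 i, Or.inl rfl⟩
        rw [dot_smul, dot_E] at h1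
        linarith
      · -- BC
        have h1 : dot (E i) v = 0 := by
          refine hroot i _ ?_
          rw [h]
          exact Or.inl (Or.inr ⟨i, hblk1 i, Or.inl rfl⟩)
        rwa [dot_E] at h1
    have K2 : ∀ i j : Fin n, j ∈ blk i → t (blk i) = RType.A → v j = v i := by
      intro i j hj h
      by_cases hij : j = i
      · rw [hij]
      · have h1 : dot (E j - E i) v = 0 := by
          refine hroot i _ ?_
          rw [h]
          exact ⟨j, hj, i, hblk1 i, hij, rfl⟩
        rw [dot_sub, dot_E, dot_E] at h1
        linarith
    have hveq : v = ∑ i ∈ Finset.univ.filter (fun i => t (blk i) = RType.A),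
        (v i / (blk i).card) • (∑ j ∈ blk i, E j) := by
      funext a
      rw [Finset.sum_apply]
      simp only [Pi.smul_apply, smul_eq_mul, sumE, mul_ite, mul_one, mul_zero]
      rw [Finset.sum_filter]
      have step : ∀ i : Fin n,
          (if t (blk i) = RType.A then (if a ∈ blk i then v i / (blk i).card else 0) else 0)
          = (if i ∈ blk a then (if t (blk a) = RType.A then v i / (blk a).card else 0) else 0) := by
        intro i
        by_cases hi : i ∈ blk a
        · have hbi : blk i = blk a := hblk2 a i hi
          rw [if_pos hi, hbi, if_pos (hblk1 a)]
        · have ha : a ∉ blk i := fun h => hi ((hmem i a).mp h)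
          rw [if_neg hi, if_neg ha, ite_self]
      rw [Finset.sum_congr rfl (fun i _ => step i)]
      rw [Finset.sum_ite_mem, Finset.univ_inter]
      by_cases hA : t (blk a) = RType.A
      · simp only [if_pos hA]
        have hconst : ∀ i ∈ blk a, v i / ((blk a).card : ℝ) = v a / ((blk a).card : ℝ) := by
          intro i hi
          rw [K2 a i hi hA]
        rw [Finset.sum_congr rfl hconst, Finset.sum_const, nsmul_eq_mul]
        have hcard : ((blk a).card : ℝ) ≠ 0 := by
          have : 0 < (blk a).card := Finset.card_pos.2 ⟨a, hblk1 a⟩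
          positivity
        field_simp
      · simp only [if_neg hA, Finset.sum_const_zero]
        exact K1 a hA
    rw [hveq]
    refine Submodule.sum_mem _ ?_
    intro i hi
    refine Submodule.smul_mem _ _ (Submodule.subset_span ?_)
    exact ⟨i, (Finset.mem_filter.1 hi).2, rfl⟩
  · -- span ⊆ kernel
    have hgen : ∀ g ∈ S, ∀ α ∈ ⋃ i, PhiOf (t (blk i)) (blk i), dot α g = 0 := by
      rintro g ⟨i, hA, rfl⟩ α hα
      obtain ⟨i', hα'⟩ := Set.mem_iUnion.1 hα
      rw [dot_sumE]
      have hsub : ∀ a b : Fin n, a ∈ blk i' → b ∈ blk i' →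
          ∑ k ∈ blk i, (E a - E b) k = 0 := by
        intro a b ha hb
        have hiff : a ∈ blk i ↔ b ∈ blk i := by
          constructor
          · intro h
            have he : blk i' = blk i := by rw [← hblk2 i' a ha, hblk2 i a h]
            rw [← he]; exact hb
          · intro h
            have he : blk i' = blk i := by rw [← hblk2 i' b hb, hblk2 i b h]
            rw [← he]; exact ha
        have hd : ∑ k ∈ blk i, (E a - E b) k
            = (∑ k ∈ blk i, E a k) - ∑ k ∈ blk i, E b k := by
          simp [Finset.sum_sub_distrib]
        rw [hd, sumE', sumE']
        by_cases h : a ∈ blk i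
        · rw [if_pos h, if_pos (hiff.1 h), sub_self]
        · rw [if_neg h, if_neg (fun hb' => h (hiff.2 hb')), sub_self]
      have hdisj : ∀ a : Fin n, a ∈ blk i' → t (blk i') ≠ RType.A → a ∉ blk i := by
        intro a ha hne h
        apply hne
        have he : blk i' = blk i := by rw [← hblk2 i' a ha, hblk2 i a h]
        rw [he]; exact hA
      have hzero : ∀ a : Fin n, a ∉ blk i → ∑ k ∈ blk i, E a k = 0 := by
        intro a ha; rw [sumE', if_neg ha]
      have hDcase : t (blk i') ≠ RType.A → α ∈ PhiD (blk i') → ∑ k ∈ blk i, α k = 0 := by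
        rintro hne ⟨a, ha, b, hb, hab, (rfl | rfl | rfl)⟩
        · exact hsub a b ha hb
        · have h1 := hzero a (hdisj a ha hne)
          have h2 := hzero b (hdisj b hb hne)
          simp [Finset.sum_add_distrib, h1, h2]
        · have h1 := hzero a (hdisj a ha hne)
          have h2 := hzero b (hdisj b hb hne)
          simp [Finset.sum_add_distrib, h1, h2]
      have hBcase : t (blk i') ≠ RType.A → α ∈ PhiB (blk i') → ∑ k ∈ blk i, α k = 0 := by
        rintro hne (hd | ⟨a, ha, (rfl | rfl)⟩)
        · exact hDcase hne hd
        · exact hzero a (hdisj a ha hne)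
        · simp [hzero a (hdisj a ha hne)]
      have hCcase : t (blk i') ≠ RType.A → α ∈ PhiC (blk i') → ∑ k ∈ blk i, α k = 0 := by
        rintro hne (hd | ⟨a, ha, (rfl | rfl)⟩)
        · exact hDcase hne hd
        · simp only [Pi.smul_apply, smul_eq_mul, ← Finset.mul_sum]
          rw [hzero a (hdisj a ha hne), mul_zero]
        · simp only [Pi.neg_apply, Pi.smul_apply, smul_eq_mul, Finset.sum_neg_distrib,
            ← Finset.mul_sum]
          rw [hzero a (hdisj a ha hne), mul_zero, neg_zero]
      rcases h' : t (blk i') with _ | _ | _ | _ | _ <;> rw [h'] at hα'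
      · obtain ⟨a, ha, b, hb, hab, rfl⟩ := hα'
        exact hsub a b ha hb
      · exact hDcase (by rw [h']; simp) hα'
      · exact hBcase (by rw [h']; simp) hα'
      · exact hCcase (by rw [h']; simp) hα'
      · rcases hα' with hb | hc
        · exact hBcase (by rw [h']; simp) hb
        · exact hCcase (by rw [h']; simp) hc
    intro hv
    let K : Submodule ℝ (Fin n → ℝ) :=
      { carrier := {w | ∀ α ∈ ⋃ i, PhiOf (t (blk i)) (blk i), dot α w = 0}
        add_mem' := fun ha hb α hα => by
          rw [dot_add_right, ha α hα, hb α hα, add_zero]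
        zero_mem' := fun α _ => by simp [dot]
        smul_mem' := fun c x hx α hα => by
          rw [dot_smul_right, hx α hα, mul_zero] }
    have hle : Submodule.span ℝ S ≤ K := Submodule.span_le.2 hgen
    exact hle hv
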